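/- arXiv:2108.04356 — 2 statements merged into one kernel-verified Lean document; each statement's English description precedes it below -/
import Mathlib

section
/- Let f : ℝ² → ℍ be integrable. Then for all x1, x2 ∈ ℝ and all s1, s2 > 0, the filtered signal f_Q satisfies the left Cauchy–Riemann equation in the pair (x1, s1): (∂/∂x1) f_Q(x1,x2,s1,s2) + i · (∂/∂s1) f_Q(x1,x2,s1,s2) = 0. -/
open MeasureTheory Real Filter
open scoped Quaternion ENNReal

/-- The quaternion imaginary unit `i`. -/
noncomputable def qi : ℍ[ℝ] := ⟨0, 1, 0, 0⟩

/-- The quaternion imaginary unit `j`. -/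
noncomputable def qj : ℍ[ℝ] := ⟨0, 0, 1, 0⟩

/-- `exp (i t) = cos t + i sin t` as a quaternion. -/
noncomputable def expI (t : ℝ) : ℍ[ℝ] := ⟨Real.cos t, Real.sin t, 0, 0⟩

/-- `exp (j t) = cos t + j sin t` as a quaternion. -/
noncomputable def expJ (t : ℝ) : ℍ[ℝ] := ⟨Real.cos t, 0, Real.sin t, 0⟩

/-- The two-sided quaternion Fourier transform of `f : ℝ² → ℍ`:
`F[f](w₁,w₂) = (1/(2π)) ∫ exp(-i w₁ x₁) f(x) exp(-j w₂ x₂) dx`. -/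
noncomputable def QFT (f : ℝ × ℝ → ℍ[ℝ]) (w₁ w₂ : ℝ) : ℍ[ℝ] :=
  (1 / (2 * π)) • ∫ x : ℝ × ℝ, expI (-(w₁ * x.1)) * f x * expJ (-(w₂ * x.2))

/-- The quaternion Hardy filter system function
`H₃(w₁,w₂,s₁,s₂) = e^{-|w₁|s₁} e^{-|w₂|s₂} (1+sgn w₁)(1+sgn w₂)`. -/
noncomputable def H3 (w₁ w₂ s₁ s₂ : ℝ) : ℝ :=
  Real.exp (-|w₁| * s₁) * Real.exp (-|w₂| * s₂) * (1 + Real.sign w₁) * (1 + Real.sign w₂)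

/-- The filtered signal `f_Q(x₁,x₂,s₁,s₂) =
(1/(2π)) ∫ exp(i w₁ x₁) H₃(w₁,w₂,s₁,s₂) F[f](w₁,w₂) exp(j w₂ x₂) dw`. -/
noncomputable def fQ (f : ℝ × ℝ → ℍ[ℝ]) (x₁ x₂ s₁ s₂ : ℝ) : ℍ[ℝ] :=
  (1 / (2 * π)) • ∫ w : ℝ × ℝ,
    expI (w.1 * x₁) * (H3 w.1 w.2 s₁ s₂ • QFT f w.1 w.2) * expJ (w.2 * x₂)

/-! For each frequency `w`, the integrand of `fQ` depends on `(x₁, s₁)` only through the factor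
`exp(i w₁ x₁) e^{-|w₁| s₁}`, so `∂ₓ₁` multiplies it by `i w₁` on the left and `∂ₛ₁` by `-|w₁|`.
The factor `1 + sgn w₁` of `H₃` kills all frequencies with `w₁ < 0`, so `w₁ = |w₁|` wherever
the integrand is nonzero and `∂ₓ₁ + i ∂ₛ₁` annihilates it pointwise. For `s₁, s₂ > 0` the
exponential decay of `H₃` dominates the integrand even after multiplication by `|w₁|`, locally
uniformly in `(x₁, s₁)`, which justifies differentiating under the integral sign. -/

open Set Topology

lemma Quaternion.norm_eq_one_of_normSq_eq_one {q : ℍ[ℝ]} (h : Quaternion.normSq q = 1) :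
    ‖q‖ = 1 := by
  rw [← Real.sqrt_mul_self (norm_nonneg q), ← Quaternion.normSq_eq_norm_mul_self, h,
    Real.sqrt_one]

lemma norm_qi : ‖qi‖ = 1 :=
  Quaternion.norm_eq_one_of_normSq_eq_one (by rw [Quaternion.normSq_def']; simp [qi])

lemma qi_mul_qi : qi * qi = -1 := by
  ext <;> simp <;> simp [qi]

lemma norm_expI (t : ℝ) : ‖expI t‖ = 1 :=
  Quaternion.norm_eq_one_of_normSq_eq_one (by rw [Quaternion.normSq_def']; simp [expI])

lemma norm_expJ (t : ℝ) : ‖expJ t‖ = 1 :=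
  Quaternion.norm_eq_one_of_normSq_eq_one (by rw [Quaternion.normSq_def']; simp [expJ])

lemma expI_eq (t : ℝ) : expI t = Real.cos t • (1 : ℍ[ℝ]) + Real.sin t • qi := by
  ext <;> simp [expI] <;> simp [qi]

lemma expJ_eq (t : ℝ) : expJ t = Real.cos t • (1 : ℍ[ℝ]) + Real.sin t • qj := by
  ext <;> simp [expJ] <;> simp [qj]

@[fun_prop]
lemma continuous_expI : Continuous expI := by
  simp only [funext expI_eq]; fun_prop

@[fun_prop]
lemma continuous_expJ : Continuous expJ := by
  simp only [funext expJ_eq]; fun_prop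

lemma hasDerivAt_expI (t : ℝ) : HasDerivAt expI (qi * expI t) t := by
  have h_qi_mul : qi * expI t = (-Real.sin t) • (1 : ℍ[ℝ]) + Real.cos t • qi := by
    rw [expI_eq, mul_add, mul_smul_comm, mul_smul_comm, mul_one, qi_mul_qi]
    module
  rw [h_qi_mul, funext expI_eq]
  exact ((hasDerivAt_cos t).smul_const _).add ((hasDerivAt_sin t).smul_const _)

lemma hasDerivAt_expI_mul (w t : ℝ) :
    HasDerivAt (fun t => expI (w * t)) (w • (qi * expI (w * t))) t :=
  (hasDerivAt_expI (w * t)).scomp t (by simpa using (hasDerivAt_id t).const_mul w)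

lemma norm_QFT_le (f : ℝ × ℝ → ℍ[ℝ]) (w₁ w₂ : ℝ) :
    ‖QFT f w₁ w₂‖ ≤ 1 / (2 * π) * ∫ x, ‖f x‖ := by
  rw [QFT, norm_smul, Real.norm_of_nonneg (by positivity)]
  gcongr
  refine (norm_integral_le_integral_norm _).trans_eq ?_
  simp only [norm_mul, norm_expI, norm_expJ, one_mul, mul_one]

lemma continuous_QFT {f : ℝ × ℝ → ℍ[ℝ]} (hf : Integrable f) :
    Continuous fun w : ℝ × ℝ => QFT f w.1 w.2 := by
  apply Continuous.fun_const_smul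
  refine continuous_of_dominated (bound := fun x => ‖f x‖) (fun w => ?_) (fun w => ?_) hf.norm
    (ae_of_all _ fun x => by fun_prop)
  · exact ((by fun_prop : Continuous fun x : ℝ × ℝ => expI (-(w.1 * x.1))).aestronglyMeasurable.mul
      hf.aestronglyMeasurable).mul
      (by fun_prop : Continuous fun x : ℝ × ℝ => expJ (-(w.2 * x.2))).aestronglyMeasurable
  · exact ae_of_all _ fun x => by
      simp only [norm_mul, norm_expI, norm_expJ, one_mul, mul_one, le_refl]

@[fun_prop]
lemma Real.measurable_sign : Measurable Real.sign :=
  Measurable.ite measurableSet_Iio measurable_const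
    (Measurable.ite measurableSet_Ioi measurable_const measurable_const)

lemma Real.abs_one_add_sign_le (u : ℝ) : |1 + Real.sign u| ≤ 2 := by
  rcases Real.sign_apply_eq u with h | h | h <;> norm_num [h]

lemma H3_eq_zero_of_neg {w₁ : ℝ} (hw₁ : w₁ < 0) (w₂ s₁ s₂ : ℝ) : H3 w₁ w₂ s₁ s₂ = 0 := by
  simp [H3, Real.sign_of_neg hw₁]

lemma abs_H3_le (w₁ w₂ s₁ s₂ : ℝ) :
    |H3 w₁ w₂ s₁ s₂| ≤ 4 * (exp (-|w₁| * s₁) * exp (-|w₂| * s₂)) := by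
  calc |H3 w₁ w₂ s₁ s₂|
      = exp (-|w₁| * s₁) * exp (-|w₂| * s₂) * (|1 + Real.sign w₁| * |1 + Real.sign w₂|) := by
        simp only [H3, abs_mul, abs_of_pos (exp_pos _)]; ring
    _ ≤ exp (-|w₁| * s₁) * exp (-|w₂| * s₂) * (2 * 2) := by
        gcongr <;> exact Real.abs_one_add_sign_le _
    _ = 4 * (exp (-|w₁| * s₁) * exp (-|w₂| * s₂)) := by ring

lemma hasDerivAt_H3 (w₁ w₂ s₁ s₂ : ℝ) :
    HasDerivAt (fun s => H3 w₁ w₂ s s₂) (-|w₁| * H3 w₁ w₂ s₁ s₂) s₁ := by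
  have h := ((((hasDerivAt_id s₁).const_mul (-|w₁|)).exp.mul_const (exp (-|w₂| * s₂))).mul_const
    (1 + Real.sign w₁)).mul_const (1 + Real.sign w₂)
  exact h.congr_deriv (by simp only [H3, id]; ring)

lemma measurable_H3 (s₁ s₂ : ℝ) : Measurable fun w : ℝ × ℝ => H3 w.1 w.2 s₁ s₂ := by
  unfold H3; fun_prop

lemma MeasureTheory.IntegrableOn.integrable_comp_abs {E : Type*} [NormedAddCommGroup E]
    {g : ℝ → E} (hg : IntegrableOn g (Ioi 0)) : Integrable fun x => g |x| := by
  have hIoi : IntegrableOn (fun x => g |x|) (Ioi 0) :=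
    hg.congr_fun (fun x hx => by rw [abs_of_pos (mem_Ioi.mp hx)]) measurableSet_Ioi
  rw [← integrableOn_univ, ← Iio_union_Ici (a := (0 : ℝ)), integrableOn_union,
    integrableOn_Ici_iff_integrableOn_Ioi,
    ← (Measure.measurePreserving_neg (volume : Measure ℝ)).integrableOn_comp_preimage
      (Homeomorph.neg ℝ).measurableEmbedding]
  simpa only [Function.comp_def, neg_preimage, neg_Iio, neg_zero, abs_neg, and_self] using hIoi

lemma integrable_exp_neg_abs_mul {b : ℝ} (hb : 0 < b) :
    Integrable fun x : ℝ => exp (-|x| * b) := by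
  simpa [mul_comm] using (exp_neg_integrableOn_Ioi 0 hb).integrable_comp_abs

lemma integrable_abs_mul_exp_neg_abs_mul {b : ℝ} (hb : 0 < b) :
    Integrable fun x : ℝ => |x| * exp (-|x| * b) := by
  have h := integrableOn_rpow_mul_exp_neg_mul_rpow (s := 1) (p := 1) (by norm_num) one_pos hb
  simpa [mul_comm b] using h.integrable_comp_abs

theorem hasDerivAt_integral_of_norm_le_exp_neg_abs {E : Type*} [NormedAddCommGroup E]
    [NormedSpace ℝ E] {F F' : ℝ → ℝ × ℝ → E} {x₀ a b C : ℝ} {s : Set ℝ}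
    (ha : 0 < a) (hb : 0 < b) (hs : s ∈ 𝓝 x₀)
    (hF_meas : ∀ x, AEStronglyMeasurable (F x)) (hF'_meas : AEStronglyMeasurable (F' x₀))
    (hF_le : ∀ x ∈ s, ∀ w, ‖F x w‖ ≤ C * (exp (-|w.1| * a) * exp (-|w.2| * b)))
    (hF'_le : ∀ x ∈ s, ∀ w, ‖F' x w‖ ≤ |w.1| * ‖F x w‖)
    (hF' : ∀ x ∈ s, ∀ w, HasDerivAt (F · w) (F' x w) x) :
    HasDerivAt (fun x => ∫ w, F x w) (∫ w, F' x₀ w) x₀ := by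
  have h_weight : Integrable fun w : ℝ × ℝ => exp (-|w.1| * a) * exp (-|w.2| * b) := by
    rw [Measure.volume_eq_prod]
    exact (integrable_exp_neg_abs_mul ha).mul_prod (integrable_exp_neg_abs_mul hb)
  have h_bound :
      Integrable fun w : ℝ × ℝ => C * (|w.1| * exp (-|w.1| * a) * exp (-|w.2| * b)) := by
    rw [Measure.volume_eq_prod]
    exact ((integrable_abs_mul_exp_neg_abs_mul ha).mul_prod
      (integrable_exp_neg_abs_mul hb)).const_mul C
  have hF_int : Integrable (F x₀) :=
    (h_weight.const_mul C).mono' (hF_meas x₀) (ae_of_all _ (hF_le x₀ (mem_of_mem_nhds hs)))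
  refine (hasDerivAt_integral_of_dominated_loc_of_deriv_le hs (Eventually.of_forall hF_meas)
    hF_int hF'_meas (ae_of_all _ fun w x hx => ?_) h_bound
    (ae_of_all _ fun w x hx => hF' x hx w)).2
  calc ‖F' x w‖ ≤ |w.1| * ‖F x w‖ := hF'_le x hx w
    _ ≤ |w.1| * (C * (exp (-|w.1| * a) * exp (-|w.2| * b))) := by gcongr; exact hF_le x hx w
    _ = C * (|w.1| * exp (-|w.1| * a) * exp (-|w.2| * b)) := by ring

noncomputable def fQIntegrand (f : ℝ × ℝ → ℍ[ℝ]) (x₁ x₂ s₁ s₂ : ℝ) (w : ℝ × ℝ) : ℍ[ℝ] :=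
  expI (w.1 * x₁) * (H3 w.1 w.2 s₁ s₂ • QFT f w.1 w.2) * expJ (w.2 * x₂)

section fQIntegrand

variable (f : ℝ × ℝ → ℍ[ℝ]) (x₁ x₂ s₁ s₂ : ℝ) (w : ℝ × ℝ)

lemma aestronglyMeasurable_fQIntegrand (hf : Integrable f) :
    AEStronglyMeasurable (fQIntegrand f x₁ x₂ s₁ s₂) :=
  ((by fun_prop : Continuous fun w : ℝ × ℝ => expI (w.1 * x₁)).aestronglyMeasurable.mul
    ((measurable_H3 s₁ s₂).aestronglyMeasurable.smul (continuous_QFT hf).aestronglyMeasurable)).mul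
    (by fun_prop : Continuous fun w : ℝ × ℝ => expJ (w.2 * x₂)).aestronglyMeasurable

lemma norm_fQIntegrand_le :
    ‖fQIntegrand f x₁ x₂ s₁ s₂ w‖ ≤
      4 * (1 / (2 * π) * ∫ x, ‖f x‖) * (exp (-|w.1| * s₁) * exp (-|w.2| * s₂)) := by
  rw [fQIntegrand, norm_mul, norm_mul, norm_expI, norm_expJ, one_mul, mul_one, norm_smul,
    Real.norm_eq_abs, mul_right_comm]
  gcongr
  · exact abs_H3_le _ _ _ _
  · exact norm_QFT_le _ _ _

lemma hasDerivAt_fQIntegrand_x₁ :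
    HasDerivAt (fun t => fQIntegrand f t x₂ s₁ s₂ w)
      (qi * (|w.1| • fQIntegrand f x₁ x₂ s₁ s₂ w)) x₁ := by
  rcases le_or_gt 0 w.1 with hw | hw
  · rw [abs_of_nonneg hw]
    refine (((hasDerivAt_expI_mul w.1 x₁).mul_const _).mul_const _).congr_deriv ?_
    simp only [fQIntegrand, smul_mul_assoc, mul_smul_comm, mul_assoc]
    exact smul_comm _ _ _
  · simp only [fQIntegrand, H3_eq_zero_of_neg hw, zero_smul, mul_zero, zero_mul, smul_zero]
    exact hasDerivAt_const _ _

lemma hasDerivAt_fQIntegrand_s₁ :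
    HasDerivAt (fun s => fQIntegrand f x₁ x₂ s s₂ w)
      (-(|w.1| • fQIntegrand f x₁ x₂ s₁ s₂ w)) s₁ := by
  refine (((hasDerivAt_H3 w.1 w.2 s₁ s₂).smul_const (QFT f w.1 w.2)).const_mul (expI (w.1 * x₁))
    |>.mul_const (expJ (w.2 * x₂))).congr_deriv ?_
  simp only [fQIntegrand, mul_smul, neg_smul, smul_mul_assoc, mul_smul_comm, neg_mul, mul_neg]

end fQIntegrand

section fQ

variable {f : ℝ × ℝ → ℍ[ℝ]} (x₁ x₂ : ℝ) {s₁ s₂ : ℝ}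

lemma hasDerivAt_fQ_x₁ (hf : Integrable f) (hs₁ : 0 < s₁) (hs₂ : 0 < s₂) :
    HasDerivAt (fun t => fQ f t x₂ s₁ s₂)
      (qi * ((1 / (2 * π)) • ∫ w, |w.1| • fQIntegrand f x₁ x₂ s₁ s₂ w)) x₁ := by
  have h := hasDerivAt_integral_of_norm_le_exp_neg_abs hs₁ hs₂ univ_mem
    (fun t => aestronglyMeasurable_fQIntegrand f t x₂ s₁ s₂ hf)
    (((continuous_abs.comp continuous_fst).aestronglyMeasurable.smul
      (aestronglyMeasurable_fQIntegrand f x₁ x₂ s₁ s₂ hf)).const_mul qi)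
    (fun t _ => norm_fQIntegrand_le f t x₂ s₁ s₂)
    (fun t _ w => by rw [norm_mul, norm_qi, one_mul, norm_smul, Real.norm_eq_abs, abs_abs])
    (fun t _ => hasDerivAt_fQIntegrand_x₁ f t x₂ s₁ s₂)
  rw [mul_smul_comm, ← smul_eq_mul qi, ← integral_smul]
  exact h.const_smul (1 / (2 * π))

lemma hasDerivAt_fQ_s₁ (hf : Integrable f) (hs₁ : 0 < s₁) (hs₂ : 0 < s₂) :
    HasDerivAt (fun s => fQ f x₁ x₂ s s₂)
      (-((1 / (2 * π)) • ∫ w, |w.1| • fQIntegrand f x₁ x₂ s₁ s₂ w)) s₁ := by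
  have h_le (s : ℝ) (hs : s ∈ Ioi (s₁ / 2)) (w : ℝ × ℝ) :
      ‖fQIntegrand f x₁ x₂ s s₂ w‖ ≤
        4 * (1 / (2 * π) * ∫ x, ‖f x‖) * (exp (-|w.1| * (s₁ / 2)) * exp (-|w.2| * s₂)) := by
    refine (norm_fQIntegrand_le f x₁ x₂ s s₂ w).trans ?_
    have : exp (-|w.1| * s) ≤ exp (-|w.1| * (s₁ / 2)) :=
      exp_le_exp.2 (mul_le_mul_of_nonpos_left (le_of_lt hs) (neg_nonpos.2 (abs_nonneg _)))
    gcongr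
  have h := hasDerivAt_integral_of_norm_le_exp_neg_abs (half_pos hs₁) hs₂
    (Ioi_mem_nhds (half_lt_self hs₁))
    (fun s => aestronglyMeasurable_fQIntegrand f x₁ x₂ s s₂ hf)
    ((continuous_abs.comp continuous_fst).aestronglyMeasurable.smul
      (aestronglyMeasurable_fQIntegrand f x₁ x₂ s₁ s₂ hf)).neg
    h_le
    (fun s _ w => by rw [norm_neg, norm_smul, Real.norm_eq_abs, abs_abs])
    (fun s _ => hasDerivAt_fQIntegrand_s₁ f x₁ x₂ s s₂)
  rw [← smul_neg, ← integral_neg]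
  exact h.const_smul (1 / (2 * π))

end fQ

/-- For integrable `f : ℝ² → ℍ`, the filtered signal `f_Q` satisfies the
left Cauchy–Riemann equation in the pair `(x₁, s₁)`:
`∂f_Q/∂x₁ + i ∂f_Q/∂s₁ = 0` for all `x₁ x₂` and `s₁, s₂ > 0`. -/
theorem fQ_left_cauchy_riemann (f : ℝ × ℝ → ℍ[ℝ]) (hf : Integrable f)
    (x₁ x₂ s₁ s₂ : ℝ) (hs₁ : 0 < s₁) (hs₂ : 0 < s₂) :
    deriv (fun t => fQ f t x₂ s₁ s₂) x₁ + qi * deriv (fun t => fQ f x₁ x₂ t s₂) s₁ = 0 := by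
  rw [(hasDerivAt_fQ_x₁ x₁ x₂ hf hs₁ hs₂).deriv, (hasDerivAt_fQ_s₁ x₁ x₂ hf hs₁ hs₂).deriv,
    mul_neg, add_neg_cancel]
end

section
/- Let H, J, K be real numbers with (H − J)² + 4K² ≠ 0. Set D := √((H − J)² + 4K²), g_max := (H + J + D)/2, and θ_max := sgn(K) · arcsin( √( (g_max − H) / (2·g_max − H − J) ) ), where sgn(K) = 1 if K ≥ 0 and sgn(K) = −1 if K < 0. Then H·cos²θ_max + 2K·cos θ_max·sin θ_max + J·sin²θ_max = g_max; i.e., θ_max maximizes θ ↦ H·cos²θ + 2K·cos θ·sin θ + J·sin²θ over ℝ. -/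
/-!
Writing `g(θ) = (H + J)/2 + (H - J)/2 · cos 2θ + K · sin 2θ`, the maximum `(H + J + D)/2` is
attained exactly when `(cos 2θ, sin 2θ) = (H - J, 2K)/D`. For `θ = arcsin √x` with `0 ≤ x ≤ 1`
one has `cos 2θ = 1 - 2x` and `sin 2θ = 2√(x(1 - x))`; the choice `x = (D + J - H)/(2D)` gives
`1 - 2x = (H - J)/D` and `x(1 - x) = (K/D)²`, which settles `K ≥ 0`. The case `K < 0` follows from
`g_{H,J,K}(-θ) = g_{H,J,-K}(θ)`, and when `D = 0` the form is constant.
-/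

open Real

namespace Real

theorem cos_two_mul_arcsin_sqrt {x : ℝ} (hx₀ : 0 ≤ x) (hx₁ : x ≤ 1) :
    cos (2 * arcsin √x) = 1 - 2 * x := by
  rw [cos_two_mul, cos_arcsin, sq_sqrt hx₀, sq_sqrt (by linarith)]
  ring

theorem sin_two_mul_arcsin_sqrt {x : ℝ} (hx₀ : 0 ≤ x) (hx₁ : x ≤ 1) :
    sin (2 * arcsin √x) = 2 * √(x * (1 - x)) := by
  rw [sin_two_mul, sin_arcsin (by linarith [sqrt_nonneg x]) (sqrt_le_one.mpr hx₁), cos_arcsin,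
    sq_sqrt hx₀, sqrt_mul hx₀, mul_assoc]

end Real

noncomputable def directionalVariation (H J K θ : ℝ) : ℝ :=
  H * cos θ ^ 2 + 2 * K * cos θ * sin θ + J * sin θ ^ 2

section

variable {H J K : ℝ}

theorem directionalVariation_eq_double_angle (θ : ℝ) :
    directionalVariation H J K θ = (H + J) / 2 + (H - J) / 2 * cos (2 * θ) + K * sin (2 * θ) := by
  rw [directionalVariation, cos_two_mul', sin_two_mul]
  linear_combination (H + J) / 2 * sin_sq_add_cos_sq θ

theorem directionalVariation_neg (θ : ℝ) :
    directionalVariation H J K (-θ) = directionalVariation H J (-K) θ := by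
  simp only [directionalVariation, cos_neg, sin_neg]
  ring

theorem directionalVariation_self_zero (H θ : ℝ) : directionalVariation H H 0 θ = H := by
  rw [directionalVariation]
  linear_combination H * cos_sq_add_sin_sq θ

theorem directionalVariation_eq_of_cos_two_mul_of_sin_two_mul {D θ : ℝ} (hD : D ≠ 0)
    (hD2 : D ^ 2 = (H - J) ^ 2 + 4 * K ^ 2)
    (hcos : cos (2 * θ) = (H - J) / D) (hsin : sin (2 * θ) = 2 * K / D) :
    directionalVariation H J K θ = (H + J + D) / 2 := by
  rw [directionalVariation_eq_double_angle, hcos, hsin]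
  field_simp
  linear_combination -hD2

theorem directionalVariation_arcsin_sqrt {D : ℝ} (hK : 0 ≤ K) (hD : 0 < D)
    (hD2 : D ^ 2 = (H - J) ^ 2 + 4 * K ^ 2) :
    directionalVariation H J K (arcsin √((D + J - H) / (2 * D))) = (H + J + D) / 2 := by
  obtain ⟨hHJ₁, hHJ₂⟩ := abs_le_of_sq_le_sq' (a := H - J) (by nlinarith) hD.le
  have hx₀ : 0 ≤ (D + J - H) / (2 * D) := div_nonneg (by linarith) (by positivity)
  have hx₁ : (D + J - H) / (2 * D) ≤ 1 := (div_le_one (by positivity)).mpr (by linarith)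
  have hprod : (D + J - H) / (2 * D) * (1 - (D + J - H) / (2 * D)) = (K / D) ^ 2 := by
    field_simp
    linear_combination hD2
  apply directionalVariation_eq_of_cos_two_mul_of_sin_two_mul hD.ne' hD2
  · rw [cos_two_mul_arcsin_sqrt hx₀ hx₁]
    field_simp
    ring
  · rw [sin_two_mul_arcsin_sqrt hx₀ hx₁, hprod, sqrt_sq (div_nonneg hK hD.le)]
    ring

end

theorem jin_gradient_direction_general (H J K : ℝ) :
    let D := Real.sqrt ((H - J) ^ 2 + 4 * K ^ 2)
    let gmax := (H + J + D) / 2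
    let θmax := (if 0 ≤ K then (1 : ℝ) else -1) *
      Real.arcsin (Real.sqrt ((gmax - H) / (2 * gmax - H - J)))
    H * Real.cos θmax ^ 2 + 2 * K * Real.cos θmax * Real.sin θmax +
      J * Real.sin θmax ^ 2 = gmax := by
  intro D gmax θmax
  have hD2 : D ^ 2 = (H - J) ^ 2 + 4 * K ^ 2 := sq_sqrt (by positivity)
  have hx : (gmax - H) / (2 * gmax - H - J) = (D + J - H) / (2 * D) := by
    rw [show gmax - H = (D + J - H) / 2 by ring, show 2 * gmax - H - J = D by ring, div_div]
  change directionalVariation H J K θmax = gmax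
  rcases (show 0 ≤ D from sqrt_nonneg _).eq_or_lt with hD0 | hD0
  · obtain ⟨rfl, rfl⟩ : J = H ∧ K = 0 := by
      constructor <;> nlinarith
    rw [directionalVariation_self_zero]
    simp only [gmax, ← hD0]
    ring
  rcases le_or_gt 0 K with hK | hK
  · simp only [θmax, if_pos hK, one_mul, hx]
    exact directionalVariation_arcsin_sqrt hK hD0 hD2
  · simp only [θmax, if_neg hK.not_ge, neg_one_mul, hx, directionalVariation_neg]
    exact directionalVariation_arcsin_sqrt (by linarith) hD0 (by rw [hD2]; ring)

/-- For real `H, J, K` with `(H − J)² + 4K² ≠ 0`, setting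
`D = √((H − J)² + 4K²)`, `g_max = (H + J + D)/2` and
`θ_max = sgn(K) · arcsin √((g_max − H)/(2 g_max − H − J))` (with `sgn K = 1` if `K ≥ 0`
and `−1` otherwise), the direction `θ_max` attains the maximum:
`H cos²θ_max + 2K cosθ_max sinθ_max + J sin²θ_max = g_max`. -/
theorem jin_gradient_direction (H J K : ℝ) (h : (H - J) ^ 2 + 4 * K ^ 2 ≠ 0) :
    let D := Real.sqrt ((H - J) ^ 2 + 4 * K ^ 2)
    let gmax := (H + J + D) / 2
    let θmax := (if 0 ≤ K then (1 : ℝ) else -1) *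
      Real.arcsin (Real.sqrt ((gmax - H) / (2 * gmax - H - J)))
    H * Real.cos θmax ^ 2 + 2 * K * Real.cos θmax * Real.sin θmax +
      J * Real.sin θmax ^ 2 = gmax :=
  jin_gradient_direction_general H J K
end
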